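/- For any joint distribution of (θ, x_P, x_F) with θ conditionally independent of x_F given x_P, and for any β ≥ 0, prior q(θ), and likelihood q(x_P|θ): I(θ; x_P | x_F) − β I(θ; x_P) ≤ E[log(p(θ|x_P)/q(θ))] − β E[log q(x_P|θ)] − β H(x_P). -/
import Mathlib


open Real

variable {Θ P F : Type*} [Fintype Θ] [Fintype P] [Fintype F]

/-- marginal p(x_P) -/
noncomputable def mP (p : Θ × P × F → ℝ) (xp : P) : ℝ := ∑ θ, ∑ xf, p (θ, xp, xf)

/-- marginal p(x_F) -/
noncomputable def mF (p : Θ × P × F → ℝ) (xf : F) : ℝ := ∑ θ, ∑ xp, p (θ, xp, xf)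

/-- marginal p(θ) -/
noncomputable def mT (p : Θ × P × F → ℝ) (θ : Θ) : ℝ := ∑ xp, ∑ xf, p (θ, xp, xf)

/-- marginal p(θ, x_P) -/
noncomputable def mTP (p : Θ × P × F → ℝ) (θ : Θ) (xp : P) : ℝ := ∑ xf, p (θ, xp, xf)

/-- marginal p(θ, x_F) -/
noncomputable def mTF (p : Θ × P × F → ℝ) (θ : Θ) (xf : F) : ℝ := ∑ xp, p (θ, xp, xf)

/-- marginal p(x_P, x_F) -/
noncomputable def mPF (p : Θ × P × F → ℝ) (xp : P) (xf : F) : ℝ := ∑ θ, p (θ, xp, xf)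

/-- mutual information I(θ; x_P) -/
noncomputable def I_T_P (p : Θ × P × F → ℝ) : ℝ :=
  ∑ θ, ∑ xp, mTP p θ xp * log (mTP p θ xp / (mT p θ * mP p xp))

/-- conditional mutual information I(θ; x_P | x_F) -/
noncomputable def I_T_P_given_F (p : Θ × P × F → ℝ) : ℝ :=
  ∑ θ, ∑ xp, ∑ xf, p (θ, xp, xf) *
    log ((p (θ, xp, xf) / mF p xf) /
      ((mTF p θ xf / mF p xf) * (mPF p xp xf / mF p xf)))

/-- entropy H(x_P) -/
noncomputable def H_P (p : Θ × P × F → ℝ) : ℝ := -∑ xp, mP p xp * log (mP p xp)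

lemma gibbs_term (a b : ℝ) (ha : 0 ≤ a) (hb : 0 ≤ b) (h : 0 < a → 0 < b) :
    a - b ≤ a * log (a / b) := by
  rcases ha.eq_or_lt with h0 | h0
  · simp [← h0, hb]
  · have hb' := h h0
    have h1 : log (b / a) ≤ b / a - 1 := Real.log_le_sub_one_of_pos (by positivity)
    have h2 : a * log (b / a) ≤ a * (b / a - 1) :=
      mul_le_mul_of_nonneg_left h1 h0.le
    have h3 : a * (b / a - 1) = b - a := by field_simp
    have h4 : log (a / b) = - log (b / a) := by
      rw [← Real.log_inv]; congr 1; field_simp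
    nlinarith [h2, h3]

/-- Variational bound on the predictive information bottleneck objective:
    I(θ; x_P | x_F) − β I(θ; x_P)
      ≤ E[log(p(θ|x_P)/q(θ))] − β E[log q(x_P|θ)] − β H(x_P). -/
theorem pib_variational_bound (p : Θ × P × F → ℝ)
    (hp0 : ∀ w, 0 ≤ p w) (hp1 : ∑ w, p w = 1)
    (hCI : ∀ θ xp xf, p (θ, xp, xf) * mP p xp = mTP p θ xp * mPF p xp xf)
    (β : ℝ) (hβ : 0 ≤ β)
    (q : Θ → ℝ) (hq0 : ∀ θ, 0 < q θ) (hq1 : ∑ θ, q θ = 1)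
    (qL : Θ → P → ℝ) (hqL0 : ∀ θ xp, 0 < qL θ xp) (hqL1 : ∀ θ, ∑ xp, qL θ xp = 1) :
    I_T_P_given_F p - β * I_T_P p ≤
      (∑ θ, ∑ xp, ∑ xf, p (θ, xp, xf) * log ((mTP p θ xp / mP p xp) / q θ)) -
        β * (∑ θ, ∑ xp, ∑ xf, p (θ, xp, xf) * log (qL θ xp)) - β * H_P p := by
  -- nonnegativity of marginals
  have hmP0 : ∀ xp, 0 ≤ mP p xp := fun xp =>
    Finset.sum_nonneg fun θ _ => Finset.sum_nonneg fun xf _ => hp0 _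
  have hmF0 : ∀ xf, 0 ≤ mF p xf := fun xf =>
    Finset.sum_nonneg fun θ _ => Finset.sum_nonneg fun xp _ => hp0 _
  have hmT0 : ∀ θ, 0 ≤ mT p θ := fun θ =>
    Finset.sum_nonneg fun xp _ => Finset.sum_nonneg fun xf _ => hp0 _
  have hmTP0 : ∀ θ xp, 0 ≤ mTP p θ xp := fun θ xp =>
    Finset.sum_nonneg fun xf _ => hp0 _
  have hmTF0 : ∀ θ xf, 0 ≤ mTF p θ xf := fun θ xf =>
    Finset.sum_nonneg fun xp _ => hp0 _
  have hmPF0 : ∀ xp xf, 0 ≤ mPF p xp xf := fun xp xf =>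
    Finset.sum_nonneg fun θ _ => hp0 _
  -- domination facts
  have hp_le_mTP : ∀ θ xp xf, p (θ, xp, xf) ≤ mTP p θ xp := fun θ xp xf =>
    Finset.single_le_sum (f := fun xf => p (θ, xp, xf)) (fun i _ => hp0 _) (Finset.mem_univ xf)
  have hp_le_mTF : ∀ θ xp xf, p (θ, xp, xf) ≤ mTF p θ xf := fun θ xp xf =>
    Finset.single_le_sum (f := fun xp => p (θ, xp, xf)) (fun i _ => hp0 _) (Finset.mem_univ xp)
  have hp_le_mPF : ∀ θ xp xf, p (θ, xp, xf) ≤ mPF p xp xf := fun θ xp xf =>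
    Finset.single_le_sum (f := fun θ => p (θ, xp, xf)) (fun i _ => hp0 _) (Finset.mem_univ θ)
  have hmTP_le_mP : ∀ θ xp, mTP p θ xp ≤ mP p xp := fun θ xp =>
    Finset.single_le_sum (f := fun θ => mTP p θ xp) (fun i _ => hmTP0 _ _) (Finset.mem_univ θ)
  have hmTP_le_mT : ∀ θ xp, mTP p θ xp ≤ mT p θ := fun θ xp =>
    Finset.single_le_sum (f := fun xp => mTP p θ xp) (fun i _ => hmTP0 _ _) (Finset.mem_univ xp)
  have hmTF_le_mF : ∀ θ xf, mTF p θ xf ≤ mF p xf := fun θ xf =>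
    Finset.single_le_sum (f := fun θ => mTF p θ xf) (fun i _ => hmTF0 _ _) (Finset.mem_univ θ)
  -- basic sum-to-one facts
  have hsum : ∑ θ, ∑ xp, ∑ xf, p (θ, xp, xf) = 1 := by
    rw [← hp1, Fintype.sum_prod_type]
    exact Finset.sum_congr rfl fun θ _ =>
      (Fintype.sum_prod_type (f := fun y : P × F => p (θ, y))).symm
  have hmTFsum : ∑ θ, ∑ xf, mTF p θ xf = 1 := by
    rw [← hsum]
    exact Finset.sum_congr rfl fun θ _ => Finset.sum_comm
  have hmTPsum : ∑ θ, ∑ xp, mTP p θ xp = 1 := hsum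
  have hmFsum : ∑ xf, mF p xf = 1 := by
    rw [← hsum]
    rw [show (∑ xf, mF p xf) = ∑ xf, ∑ θ, ∑ xp, p (θ, xp, xf) from rfl, Finset.sum_comm]
    exact Finset.sum_congr rfl fun θ _ => Finset.sum_comm
  have hmTsum : ∑ θ, mT p θ = 1 := hsum
  -- Part A identity
  have hA : (∑ θ, ∑ xp, ∑ xf, p (θ, xp, xf) * log ((mTP p θ xp / mP p xp) / q θ))
      - I_T_P_given_F p
      = ∑ θ, ∑ xf, mTF p θ xf * log (mTF p θ xf / (q θ * mF p xf)) := by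
    rw [I_T_P_given_F, ← Finset.sum_sub_distrib]
    apply Finset.sum_congr rfl; intro θ _
    rw [← Finset.sum_sub_distrib]
    simp_rw [← Finset.sum_sub_distrib]
    rw [Finset.sum_comm]
    apply Finset.sum_congr rfl; intro xf _
    rw [show mTF p θ xf * log (mTF p θ xf / (q θ * mF p xf))
        = ∑ xp, p (θ, xp, xf) * log (mTF p θ xf / (q θ * mF p xf)) from by rw [mTF, Finset.sum_mul]]
    apply Finset.sum_congr rfl; intro xp _
    rcases (hp0 (θ, xp, xf)).eq_or_lt with h0 | h0
    · simp [← h0]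
    · have hTP : 0 < mTP p θ xp := lt_of_lt_of_le h0 (hp_le_mTP θ xp xf)
      have hTF : 0 < mTF p θ xf := lt_of_lt_of_le h0 (hp_le_mTF θ xp xf)
      have hPF : 0 < mPF p xp xf := lt_of_lt_of_le h0 (hp_le_mPF θ xp xf)
      have hPp : 0 < mP p xp := lt_of_lt_of_le hTP (hmTP_le_mP θ xp)
      have hFp : 0 < mF p xf := lt_of_lt_of_le hTF (hmTF_le_mF θ xf)
      have hqp := hq0 θ
      have hlog : log (p (θ, xp, xf)) + log (mP p xp)
          = log (mTP p θ xp) + log (mPF p xp xf) := by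
        have := congrArg log (hCI θ xp xf)
        rwa [Real.log_mul h0.ne' hPp.ne', Real.log_mul hTP.ne' hPF.ne'] at this
      have e1 : log ((mTP p θ xp / mP p xp) / q θ)
          = log (mTP p θ xp) - log (mP p xp) - log (q θ) := by
        rw [Real.log_div (div_pos hTP hPp).ne' hqp.ne', Real.log_div hTP.ne' hPp.ne']
      have e2 : log ((p (θ, xp, xf) / mF p xf) /
            ((mTF p θ xf / mF p xf) * (mPF p xp xf / mF p xf)))
          = (log (p (θ, xp, xf)) - log (mF p xf))
            - ((log (mTF p θ xf) - log (mF p xf)) + (log (mPF p xp xf) - log (mF p xf))) := by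
        rw [Real.log_div (div_pos h0 hFp).ne'
            (mul_pos (div_pos hTF hFp) (div_pos hPF hFp)).ne',
          Real.log_mul (div_pos hTF hFp).ne' (div_pos hPF hFp).ne',
          Real.log_div h0.ne' hFp.ne', Real.log_div hTF.ne' hFp.ne',
          Real.log_div hPF.ne' hFp.ne']
      have e3 : log (mTF p θ xf / (q θ * mF p xf))
          = log (mTF p θ xf) - (log (q θ) + log (mF p xf)) := by
        rw [Real.log_div hTF.ne' (mul_pos hqp hFp).ne', Real.log_mul hqp.ne' hFp.ne']
      rw [e1, e2, e3]
      linear_combination (-(p (θ, xp, xf))) * hlog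
  -- Part B identity
  have hB : I_T_P p - (∑ θ, ∑ xp, ∑ xf, p (θ, xp, xf) * log (qL θ xp)) - H_P p
      = ∑ θ, ∑ xp, mTP p θ xp * log (mTP p θ xp / (mT p θ * qL θ xp)) := by
    have hqlog : ∀ θ, ∀ xp, ∑ xf, p (θ, xp, xf) * log (qL θ xp)
        = mTP p θ xp * log (qL θ xp) := fun θ xp =>
      (Finset.sum_mul (f := fun xf => p (θ, xp, xf)) _ _).symm
    have hHP : H_P p = -∑ θ, ∑ xp, mTP p θ xp * log (mP p xp) := by
      rw [H_P, Finset.sum_comm]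
      congr 1
      apply Finset.sum_congr rfl; intro xp _
      rw [← Finset.sum_mul]
      rfl
    rw [hHP, I_T_P, sub_neg_eq_add, ← Finset.sum_sub_distrib, ← Finset.sum_add_distrib]
    apply Finset.sum_congr rfl; intro θ _
    rw [← Finset.sum_sub_distrib, ← Finset.sum_add_distrib]
    apply Finset.sum_congr rfl; intro xp _
    rw [hqlog θ xp]
    rcases (hmTP0 θ xp).eq_or_lt with h0 | h0
    · simp [← h0]
    · have hTp : 0 < mT p θ := lt_of_lt_of_le h0 (hmTP_le_mT θ xp)
      have hPp : 0 < mP p xp := lt_of_lt_of_le h0 (hmTP_le_mP θ xp)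
      have hqp := hqL0 θ xp
      rw [Real.log_div h0.ne' (mul_pos hTp hPp).ne',
          Real.log_div h0.ne' (mul_pos hTp hqp).ne',
          Real.log_mul hTp.ne' hPp.ne',
          Real.log_mul hTp.ne' hqp.ne']
      ring
  -- Gibbs nonnegativity of the two KL terms
  have hS1 : 0 ≤ ∑ θ, ∑ xf, mTF p θ xf * log (mTF p θ xf / (q θ * mF p xf)) := by
    have hle : ∑ θ, ∑ xf, (mTF p θ xf - q θ * mF p xf)
        ≤ ∑ θ, ∑ xf, mTF p θ xf * log (mTF p θ xf / (q θ * mF p xf)) := by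
      apply Finset.sum_le_sum; intro θ _
      apply Finset.sum_le_sum; intro xf _
      exact gibbs_term _ _ (hmTF0 θ xf) (mul_nonneg (hq0 θ).le (hmF0 xf))
        (fun h => mul_pos (hq0 θ) (lt_of_lt_of_le h (hmTF_le_mF θ xf)))
    have heq : ∑ θ, ∑ xf, (mTF p θ xf - q θ * mF p xf) = 0 := by
      have h2 : ∑ θ, ∑ xf, q θ * mF p xf = 1 := by
        simp_rw [← Finset.mul_sum, hmFsum, mul_one, hq1]
      simp_rw [Finset.sum_sub_distrib]
      rw [hmTFsum, h2]; ring
    linarith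
  have hS2 : 0 ≤ ∑ θ, ∑ xp, mTP p θ xp * log (mTP p θ xp / (mT p θ * qL θ xp)) := by
    have hle : ∑ θ, ∑ xp, (mTP p θ xp - mT p θ * qL θ xp)
        ≤ ∑ θ, ∑ xp, mTP p θ xp * log (mTP p θ xp / (mT p θ * qL θ xp)) := by
      apply Finset.sum_le_sum; intro θ _
      apply Finset.sum_le_sum; intro xp _
      exact gibbs_term _ _ (hmTP0 θ xp)
        (mul_nonneg (hmT0 θ) (hqL0 θ xp).le)
        (fun h => mul_pos (lt_of_lt_of_le h (hmTP_le_mT θ xp)) (hqL0 θ xp))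
    have heq : ∑ θ, ∑ xp, (mTP p θ xp - mT p θ * qL θ xp) = 0 := by
      have h2 : ∑ θ, ∑ xp, mT p θ * qL θ xp = 1 := by
        simp_rw [← Finset.mul_sum, hqL1, mul_one]
        exact hmTsum
      simp_rw [Finset.sum_sub_distrib]
      rw [hmTPsum, h2]; ring
    linarith
  nlinarith [mul_nonneg hβ hS2]
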